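/- arXiv:1610.07075 — 4 statements merged into one kernel-verified Lean document; each statement's English description precedes it below -/
import Mathlib

section
/- Let (Ω, 𝔄, μ) be a probability space, 1 ≤ p ≤ ∞, and p′ the conjugate exponent (1/p + 1/p′ = 1). A measurable function g : Ω → ℝ belongs to L_{p′}(μ) if and only if f·g ∈ L_1(μ) for every f ∈ L_p(μ). -/
/-! If `f ↦ ‖f g‖₁` were bounded by `C ‖f‖_p` on `L^p`, testing it against the truncated Hölder
extremals `min(|g|, n)^(p' - 1)` (against the indicator of `{|g| > C}` when `p' = ∞`) would give
`‖g‖_{p'} ≤ C`. So if `g ∉ L^{p'}` there are `f_k ∈ L^p` with `‖f_k‖_p ≤ 2^{-k}` and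
`‖f_k g‖₁ ≥ k`: a gliding hump. The series `∑ |f_k|` converges in `L^p`, hence a.e., and its sum
`F ∈ L^p` dominates every `|f_k|`, so `‖F g‖₁ = ∞`. -/

open MeasureTheory
open scoped ENNReal

lemma ENNReal.le_rpow_of_le_mul_rpow_inv {a c : ℝ≥0∞} {s r : ℝ} (hsr : s.HolderConjugate r)
    (ha : a ≠ ∞) (h : a ≤ c * a ^ s⁻¹) : a ≤ c ^ r := by
  rcases eq_or_ne a 0 with rfl | ha₀
  · exact zero_le
  have hr := hsr.symm.pos
  have hroot : a ^ r⁻¹ ≤ c := by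
    refine (ENNReal.mul_le_mul_iff_left (ENNReal.rpow_pos (pos_iff_ne_zero.2 ha₀) ha).ne'
      (ENNReal.rpow_ne_top_of_nonneg (inv_nonneg.2 hsr.pos.le) ha)).1 (le_trans (le_of_eq ?_) h)
    rw [← ENNReal.rpow_add _ _ ha₀ ha, add_comm, hsr.inv_add_inv_eq_one, ENNReal.rpow_one]
  calc a = (a ^ r⁻¹) ^ r := by rw [← ENNReal.rpow_mul, inv_mul_cancel₀ hr.ne', ENNReal.rpow_one]
    _ ≤ c ^ r := ENNReal.rpow_le_rpow hroot hr.le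

namespace MeasureTheory

variable {Ω : Type*} [MeasurableSpace Ω] {μ : Measure Ω} {p p' : ℝ≥0∞} {g : Ω → ℝ} {C : ℝ≥0∞}

lemma lintegral_rpow_eq_iSup_min (hg : Measurable g) {r : ℝ} (hr : 0 < r) :
    ∫⁻ x, ‖g x‖ₑ ^ r ∂μ = ⨆ n : ℕ, ∫⁻ x, min ‖g x‖ₑ n ^ r ∂μ := by
  rw [← lintegral_iSup (fun n => (hg.enorm.min measurable_const).pow_const r)
    fun m n hmn x => ENNReal.rpow_le_rpow (min_le_min_left _ (Nat.cast_le.2 hmn)) hr.le]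
  refine lintegral_congr fun x => ?_
  have := (ENNReal.orderIsoRpow r hr).map_iSup fun n : ℕ => min ‖g x‖ₑ n
  rw [← inf_iSup_eq, ENNReal.iSup_natCast, inf_top_eq] at this
  exact this

lemma lintegral_min_rpow_le_of_forall_eLpNorm_mul_le [IsFiniteMeasure μ] [p.HolderConjugate p']
    (hp : p ≠ ∞) (hp' : p' ≠ ∞) (hg : Measurable g)
    (h : ∀ f : Ω → ℝ, MemLp f p μ → eLpNorm (f * g) 1 μ ≤ C * eLpNorm f p μ) (n : ℕ) :
    ∫⁻ x, min ‖g x‖ₑ n ^ p'.toReal ∂μ ≤ C ^ p'.toReal := by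
  have hconj : p.toReal.HolderConjugate p'.toReal :=
    ENNReal.HolderConjugate.toReal_of_ne_top hp hp'
  set s := p.toReal
  set r := p'.toReal
  have hr₁ : 0 ≤ r - 1 := hconj.symm.sub_one_pos.le
  set G : Ω → ℝ≥0∞ := fun x => min ‖g x‖ₑ n
  have hG : Measurable G := hg.enorm.min measurable_const
  have hGn : ∀ x, G x ≤ n := fun x => min_le_right _ _
  have hGr : ∀ x, G x ^ (r - 1) ≠ ∞ := fun x =>
    ENNReal.rpow_ne_top_of_nonneg hr₁ (ne_top_of_le_ne_top (ENNReal.natCast_ne_top n) (hGn x))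
  set f : Ω → ℝ := fun x => (G x ^ (r - 1)).toReal
  have hf : MemLp f p μ := by
    refine .of_bound (hG.pow_const _).ennreal_toReal.aestronglyMeasurable
      (((n : ℝ≥0∞) ^ (r - 1)).toReal) (.of_forall fun x => ?_)
    rw [Real.norm_of_nonneg ENNReal.toReal_nonneg]
    exact ENNReal.toReal_mono (ENNReal.rpow_ne_top_of_nonneg hr₁ (ENNReal.natCast_ne_top n))
      (ENNReal.rpow_le_rpow (hGn x) hr₁)
  have hf_norm : eLpNorm f p μ = (∫⁻ x, G x ^ r ∂μ) ^ s⁻¹ := by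
    rw [eLpNorm_eq_lintegral_rpow_enorm_toReal (ENNReal.HolderConjugate.ne_zero p p') hp, one_div]
    congr 1
    refine lintegral_congr fun x => ?_
    rw [Real.enorm_toReal (hGr x), ← ENNReal.rpow_mul, hconj.symm.sub_one_mul_conj]
  have hfg : ∫⁻ x, G x ^ r ∂μ ≤ eLpNorm (f * g) 1 μ := by
    rw [eLpNorm_one_eq_lintegral_enorm]
    refine lintegral_mono fun x => ?_
    calc G x ^ r = G x ^ (r - 1) * G x := by
          simpa using ENNReal.rpow_add_of_nonneg (x := G x) _ _ hr₁ zero_le_one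
      _ ≤ ‖f x * g x‖ₑ := by
          rw [enorm_mul, Real.enorm_toReal (hGr x)]
          gcongr
          exact min_le_left _ _
  have hG_fin : ∫⁻ x, G x ^ r ∂μ ≠ ∞ := by
    refine ne_top_of_le_ne_top (ENNReal.mul_ne_top (ENNReal.rpow_ne_top_of_nonneg
      hconj.symm.nonneg (ENNReal.natCast_ne_top n)) (measure_ne_top μ Set.univ)) ?_
    rw [← lintegral_const]
    exact lintegral_mono fun x => ENNReal.rpow_le_rpow (hGn x) hconj.symm.nonneg
  exact ENNReal.le_rpow_of_le_mul_rpow_inv hconj hG_fin (hf_norm ▸ hfg.trans (h f hf))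

lemma eLpNorm_le_of_forall_eLpNorm_mul_le_of_ne_top [IsFiniteMeasure μ] [p.HolderConjugate p']
    (hp : p ≠ ∞) (hp' : p' ≠ ∞) (hg : Measurable g)
    (h : ∀ f : Ω → ℝ, MemLp f p μ → eLpNorm (f * g) 1 μ ≤ C * eLpNorm f p μ) :
    eLpNorm g p' μ ≤ C := by
  have hr : 0 < p'.toReal := ENNReal.toReal_pos (ENNReal.HolderConjugate.ne_zero p' p) hp'
  rw [eLpNorm_eq_lintegral_rpow_enorm_toReal (ENNReal.HolderConjugate.ne_zero p' p) hp',
    lintegral_rpow_eq_iSup_min hg hr]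
  calc (⨆ n : ℕ, ∫⁻ x, min ‖g x‖ₑ n ^ p'.toReal ∂μ) ^ (1 / p'.toReal)
      ≤ (C ^ p'.toReal) ^ (1 / p'.toReal) := by
        gcongr
        exact iSup_le (lintegral_min_rpow_le_of_forall_eLpNorm_mul_le hp hp' hg h)
    _ = C := by rw [← ENNReal.rpow_mul, mul_one_div_cancel hr.ne', ENNReal.rpow_one]

lemma eLpNorm_top_le_of_forall_eLpNorm_mul_le [IsFiniteMeasure μ] (hg : Measurable g)
    (h : ∀ f : Ω → ℝ, MemLp f 1 μ → eLpNorm (f * g) 1 μ ≤ C * eLpNorm f 1 μ) :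
    eLpNorm g ∞ μ ≤ C := by
  rcases eq_or_ne C ∞ with rfl | hC
  · exact le_top
  set A := {x | C < ‖g x‖ₑ}
  have hA : MeasurableSet A := measurableSet_lt measurable_const hg.enorm
  have hA_null : μ A = 0 := by
    by_contra hA₀
    have hle : ∫⁻ x in A, ‖g x‖ₑ ∂μ ≤ ∫⁻ x in A, C ∂μ := by
      have hmul : (A.indicator fun _ => (1 : ℝ)) * g = A.indicator g := by
        ext x
        by_cases hx : x ∈ A <;> simp [hx]
      have := h _ ((memLp_const (1 : ℝ)).indicator hA)
      rw [hmul, eLpNorm_indicator_const hA one_ne_zero ENNReal.one_ne_top,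
        eLpNorm_one_eq_lintegral_enorm] at this
      simp_rw [enorm_indicator_eq_indicator_enorm, lintegral_indicator hA] at this
      simpa [setLIntegral_const] using this
    exact (setLIntegral_strict_mono hA hA₀ hg.enorm (by
      rw [setLIntegral_const]; exact ENNReal.mul_ne_top hC (measure_ne_top μ A))
      (.of_forall fun x hx => hx)).not_ge hle
  rw [eLpNorm_exponent_top]
  exact eLpNormEssSup_le_of_ae_enorm_bound (by simpa [ae_iff, A] using hA_null)

theorem eLpNorm_le_of_forall_eLpNorm_mul_le [IsFiniteMeasure μ] [p.HolderConjugate p']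
    (hg : Measurable g)
    (h : ∀ f : Ω → ℝ, MemLp f p μ → eLpNorm (f * g) 1 μ ≤ C * eLpNorm f p μ) :
    eLpNorm g p' μ ≤ C := by
  rcases eq_or_ne p ∞ with rfl | hp
  · obtain rfl : p' = 1 := (ENNReal.HolderConjugate.eq_top_iff_eq_one ∞ p').1 rfl
    calc eLpNorm g 1 μ = eLpNorm (1 * g) 1 μ := by rw [one_mul]
      _ ≤ C * eLpNorm 1 ∞ μ := h 1 (memLp_const 1)
      _ ≤ C := mul_le_of_le_one_right' (eLpNormEssSup_le_of_ae_enorm_bound (by simp))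
  rcases eq_or_ne p' ∞ with rfl | hp'
  · obtain rfl : p = 1 := (ENNReal.HolderConjugate.eq_top_iff_eq_one ∞ p).1 rfl
    exact eLpNorm_top_le_of_forall_eLpNorm_mul_le hg h
  exact eLpNorm_le_of_forall_eLpNorm_mul_le_of_ne_top hp hp' hg h

lemma exists_memLp_eLpNorm_le_and_le_eLpNorm_mul [IsFiniteMeasure μ] [p.HolderConjugate p']
    (hg : Measurable g) (hgp : eLpNorm g p' μ = ∞) {ε M : ℝ≥0∞} (hε : ε ≠ 0) (hε' : ε ≠ ∞)
    (hM : M ≠ ∞) : ∃ f : Ω → ℝ, MemLp f p μ ∧ eLpNorm f p μ ≤ ε ∧ M ≤ eLpNorm (f * g) 1 μ := by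
  obtain ⟨f, hf, hlt⟩ : ∃ f, MemLp f p μ ∧ M / ε * eLpNorm f p μ < eLpNorm (f * g) 1 μ := by
    by_contra! hcon
    exact ENNReal.div_ne_top hM hε
      (top_le_iff.1 (hgp ▸ eLpNorm_le_of_forall_eLpNorm_mul_le hg hcon))
  set N := eLpNorm f p μ
  have hN : N ≠ ∞ := hf.eLpNorm_ne_top
  have hN₀ : N ≠ 0 := by
    intro hN₀
    have hf₀ : f =ᵐ[μ] 0 := (eLpNorm_eq_zero_iff hf.1 (ENNReal.HolderConjugate.ne_zero p p')).1 hN₀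
    have : f * g =ᵐ[μ] 0 := by filter_upwards [hf₀] with x hx; simp [hx]
    simp [N, hN₀, eLpNorm_congr_ae this] at hlt
  have hc : ‖(ε / N).toReal‖ₑ = ε / N := Real.enorm_toReal (ENNReal.div_ne_top hε' hN₀)
  refine ⟨(ε / N).toReal • f, hf.const_smul _, ?_, ?_⟩
  · rw [eLpNorm_const_smul, hc, ENNReal.div_mul_cancel hN₀ hN]
  · calc M = ε / N * (M / ε * N) := by
          rw [mul_comm (M / ε), ← mul_assoc, ENNReal.div_mul_cancel hN₀ hN,
            ENNReal.mul_div_cancel hε hε']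
      _ ≤ ε / N * eLpNorm (f * g) 1 μ := by gcongr
      _ = eLpNorm ((ε / N).toReal • f * g) 1 μ := by rw [smul_mul_assoc, eLpNorm_const_smul, hc]

lemma exists_memLp_not_integrable_mul_of_tsum_ne_top [Fact (1 ≤ p)] {f : ℕ → Ω → ℝ}
    (hf : ∀ k, MemLp (f k) p μ) (hsum : ∑' k, eLpNorm (f k) p μ ≠ ∞)
    (hunb : ⨆ k, eLpNorm (f k * g) 1 μ = ∞) :
    ∃ F : Ω → ℝ, MemLp F p μ ∧ ¬ Integrable (fun x => F x * g x) μ := by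
  set u : ℕ → Lp ℝ p μ := fun k => (hf k).norm.toLp _
  have hu : ∑' k, ‖u k‖ₑ ≠ ∞ := by simpa only [u, Lp.enorm_toLp, eLpNorm_norm] using hsum
  set F : Ω → ℝ := ⇑(∑' k, u k)
  have hle : ∀ᵐ x ∂μ, ∀ k, ‖f k x‖ ≤ F x := by
    filter_upwards [Lp.hasSum_coeFn_tsum hu, ae_all_iff.2 fun k => (hf k).norm.coeFn_toLp]
      with x hx hcoe k
    rw [← hcoe k]
    exact le_hasSum hx k fun j _ => by rw [hcoe j]; exact norm_nonneg _
  refine ⟨F, Lp.memLp _, fun hint => (memLp_one_iff_integrable.2 hint).eLpNorm_ne_top ?_⟩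
  refine top_unique (hunb ▸ iSup_le fun k => eLpNorm_mono_ae ?_)
  filter_upwards [hle] with x hx
  rw [Pi.mul_apply, norm_mul, norm_mul]
  exact mul_le_mul_of_nonneg_right ((hx k).trans (Real.le_norm_self _)) (norm_nonneg _)

theorem exists_memLp_not_integrable_mul_of_eLpNorm_eq_top [IsFiniteMeasure μ]
    [p.HolderConjugate p'] (hg : Measurable g) (hgp : eLpNorm g p' μ = ∞) :
    ∃ f : Ω → ℝ, MemLp f p μ ∧ ¬ Integrable (fun x => f x * g x) μ := by
  have : Fact (1 ≤ p) := ⟨ENNReal.HolderConjugate.one_le p p'⟩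
  choose f hf hfp hfg using fun k : ℕ => exists_memLp_eLpNorm_le_and_le_eLpNorm_mul (p := p) hg hgp
    (ε := 2⁻¹ ^ k) (M := k) (by simp) (by simp) (ENNReal.natCast_ne_top k)
  refine exists_memLp_not_integrable_mul_of_tsum_ne_top hf ?_ ?_
  · refine ne_top_of_le_ne_top ?_ (ENNReal.tsum_le_tsum hfp)
    rw [ENNReal.tsum_geometric]
    simp
  · exact top_unique (ENNReal.iSup_natCast ▸ iSup_mono hfg)

end MeasureTheory

theorem stmt0_general {Ω : Type*} [MeasurableSpace Ω] (μ : Measure Ω) [IsProbabilityMeasure μ]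
    (p p' : ℝ≥0∞) (hpq : 1 / p + 1 / p' = 1)
    (g : Ω → ℝ) (hg : Measurable g) :
    MemLp g p' μ ↔ ∀ f : Ω → ℝ, MemLp f p μ → Integrable (fun x => f x * g x) μ := by
  have : p.HolderConjugate p' := ENNReal.holderConjugate_iff.2 (by simpa only [one_div] using hpq)
  refine ⟨fun hgp f hf => hf.integrable_mul hgp, fun h => ?_⟩
  by_contra hgp
  obtain ⟨f, hf, hfg⟩ := exists_memLp_not_integrable_mul_of_eLpNorm_eq_top (p := p) hg
    (by simpa [MemLp, hg.aestronglyMeasurable] using hgp)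
  exact hfg (h f hf)

/-- A measurable `g` belongs to `L_{p'}(μ)` iff `f * g` is integrable for every `f ∈ L_p(μ)`,
where `μ` is a probability measure and `1/p + 1/p' = 1`. -/
theorem stmt0 {Ω : Type*} [MeasurableSpace Ω] (μ : Measure Ω) [IsProbabilityMeasure μ]
    (p p' : ℝ≥0∞) (hp : 1 ≤ p) (hpq : 1 / p + 1 / p' = 1)
    (g : Ω → ℝ) (hg : Measurable g) :
    MemLp g p' μ ↔ ∀ f : Ω → ℝ, MemLp f p μ → Integrable (fun x => f x * g x) μ :=
  stmt0_general μ p p' hpq g hg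
end

section
/- Let D = [0,∞), a,b > 0, c = 1/∫_0^∞ exp(−b t^a) dt, ψ(t) = c·exp(−b t^a), and ψ̄(t) = ∫_t^∞ ψ(y) dy. For 1 ≤ p < ∞, the condition ψ̄·ψ^{−1/p} ∈ L_{p′}([0,∞)) (with p′ the conjugate exponent) holds if and only if a ≥ 1 or p > 1. -/
open MeasureTheory
open scoped ENNReal
set_option maxHeartbeats 1000000

private lemma aux_integrable {a K : ℝ} (ha : 0 < a) (hK : 0 < K) :
    IntegrableOn (fun y : ℝ => Real.exp (-K * y ^ a)) (Set.Ioi 0) := by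
  by_contra h
  have h2 := integral_exp_neg_mul_rpow ha hK
  rw [MeasureTheory.integral_undef h] at h2
  have hpos : 0 < K ^ (-1 / a) * Real.Gamma (1 / a + 1) :=
    mul_pos (Real.rpow_pos_of_pos hK _) (Real.Gamma_pos_of_pos (by positivity))
  exact hpos.ne' h2.symm

private lemma aux_integrable' {a K : ℝ} (ha : 0 < a) (hK : 0 < K) {t : ℝ} (ht : 0 ≤ t) :
    IntegrableOn (fun y : ℝ => Real.exp (-K * y ^ a)) (Set.Ioi t) :=
  (aux_integrable ha hK).mono_set (Set.Ioi_subset_Ioi ht)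

/-- For `ψ(t) = c·exp(−b t^a)` on `[0,∞)` and `1 ≤ p < ∞` with conjugate exponent `p'`,
the condition `ψ̄·ψ^{−1/p} ∈ L_{p'}([0,∞))` holds iff `a ≥ 1` or `p > 1`. -/
theorem stmt6 (a b c p : ℝ) (ha : 0 < a) (hb : 0 < b) (hp : 1 ≤ p)
    (hc : c = 1 / ∫ t in Set.Ioi (0:ℝ), Real.exp (-b * t ^ a))
    (p' : ℝ≥0∞)
    (hp' : (p = 1 ∧ p' = ⊤) ∨ (1 < p ∧ p' = ENNReal.ofReal (p / (p - 1))))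
    (ψ ψb : ℝ → ℝ)
    (hψ : ∀ t, ψ t = c * Real.exp (-b * t ^ a))
    (hψb : ∀ t, ψb t = ∫ y in Set.Ioi t, c * Real.exp (-b * y ^ a)) :
    MemLp (fun t => ψb t * (ψ t) ^ (-(1 / p))) p' (volume.restrict (Set.Ici (0:ℝ)))
    ↔ (1 ≤ a ∨ 1 < p) := by
  set I : ℝ := ∫ t in Set.Ioi (0:ℝ), Real.exp (-b * t ^ a) with hI
  have hIpos : 0 < I := by
    rw [hI, integral_exp_neg_mul_rpow ha hb]
    exact mul_pos (Real.rpow_pos_of_pos hb _) (Real.Gamma_pos_of_pos (by positivity))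
  have hcpos : 0 < c := by rw [hc]; positivity
  have hψpos : ∀ t, 0 < ψ t := fun t => by rw [hψ]; positivity
  have hψb' : ∀ t, ψb t = c * ∫ y in Set.Ioi t, Real.exp (-b * y ^ a) := by
    intro t; rw [hψb]; exact integral_const_mul c _
  have hψbnn : ∀ t, 0 ≤ ψb t := by
    intro t; rw [hψb]
    exact setIntegral_nonneg measurableSet_Ioi fun y _ => by positivity
  have hanti : AntitoneOn ψb (Set.Ici (0:ℝ)) := by
    intro x hx y hy hxy
    rw [hψb' x, hψb' y]
    refine mul_le_mul_of_nonneg_left ?_ hcpos.le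
    refine setIntegral_mono_set (aux_integrable' ha hb hx) ?_
      ((Set.Ioi_subset_Ioi hxy).eventuallyLE)
    exact Filter.Eventually.of_forall fun y => by positivity
  have hψble : ∀ t, 0 ≤ t → ψb t ≤ 1 := by
    intro t ht
    have h1 : ψb t ≤ ψb 0 := hanti Set.self_mem_Ici ht ht
    have h2 : ψb 0 = 1 := by
      rw [hψb' 0, ← hI, hc, one_div, inv_mul_cancel₀ hIpos.ne']
    linarith
  have hfnn : ∀ t, 0 ≤ ψb t * (ψ t) ^ (-(1 / p)) :=
    fun t => mul_nonneg (hψbnn t) (Real.rpow_pos_of_pos (hψpos t) _).le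
  -- measurability
  have hψcont : Continuous ψ := by
    have : ψ = fun t => c * Real.exp (-b * t ^ a) := funext hψ
    rw [this]
    exact continuous_const.mul (Real.continuous_exp.comp
      (continuous_const.mul (Real.continuous_rpow_const ha.le)))
  have hpowcont : Continuous fun t => (ψ t) ^ (-(1 / p)) := by
    refine continuous_iff_continuousAt.mpr fun t => ?_
    exact (Real.continuousAt_rpow_const _ _ (Or.inl (hψpos t).ne')).comp hψcont.continuousAt
  have hmeas : AEStronglyMeasurable (fun t => ψb t * (ψ t) ^ (-(1 / p)))
      (volume.restrict (Set.Ici (0:ℝ))) := by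
    exact ((aemeasurable_restrict_of_antitoneOn measurableSet_Ici hanti).mul
      hpowcont.measurable.aemeasurable).aestronglyMeasurable
  rcases hp' with ⟨hp1, rfl⟩ | ⟨hp1, rfl⟩
  · -- p = 1, p' = ⊤
    subst hp1
    have hre : ∀ t, ψb t * (ψ t) ^ (-(1 / 1 : ℝ)) = ψb t * (ψ t)⁻¹ := by
      intro t; norm_num [Real.rpow_neg_one]
    by_cases h1a : 1 ≤ a
    · -- bounded
      refine iff_of_true ?_ (Or.inl h1a)
      refine memLp_top_of_bound hmeas (max (Real.exp b / c) (1 / b)) ?_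
      filter_upwards [ae_restrict_mem measurableSet_Ici] with t ht
      rw [Real.norm_eq_abs, abs_of_nonneg (hfnn t), hre t]
      rcases le_total t 1 with h | h
      · refine le_trans ?_ (le_max_left _ _)
        have hψge : c * Real.exp (-b) ≤ ψ t := by
          rw [hψ]
          refine mul_le_mul_of_nonneg_left (Real.exp_le_exp.mpr ?_) hcpos.le
          have : t ^ a ≤ 1 := Real.rpow_le_one ht h ha.le
          nlinarith
        have hinv : (ψ t)⁻¹ ≤ (c * Real.exp (-b))⁻¹ :=
          inv_anti₀ (by positivity) hψge
        calc ψb t * (ψ t)⁻¹ ≤ 1 * (c * Real.exp (-b))⁻¹ :=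
              mul_le_mul (hψble t ht) hinv (inv_nonneg.2 (hψpos t).le) one_pos.le
          _ = Real.exp b / c := by
              rw [Real.exp_neg]; field_simp
      · refine le_trans ?_ (le_max_right _ _)
        have ht0 : (0:ℝ) < t := lt_of_lt_of_le one_pos h
        set k : ℝ := b * t ^ (a - 1) with hk
        have hk0 : 0 < k := by positivity
        have hkb : b ≤ k := by
          rw [hk]
          nlinarith [Real.one_le_rpow h (by linarith : (0:ℝ) ≤ a - 1)]
        have hkt : k * t = b * t ^ a := by
          rw [hk, mul_assoc, ← Real.rpow_add_one ht0.ne' (a - 1)]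
          ring_nf
        have key : ψb t ≤ c * (Real.exp (-b * t ^ a) / b) := by
          rw [hψb' t]
          refine mul_le_mul_of_nonneg_left ?_ hcpos.le
          have step1 : (∫ y in Set.Ioi t, Real.exp (-b * y ^ a))
              ≤ ∫ y in Set.Ioi t, Real.exp (-k * y) := by
            refine setIntegral_mono_on
              (aux_integrable' ha hb (by linarith)) ?_ measurableSet_Ioi ?_
            · simpa using exp_neg_integrableOn_Ioi t hk0
            · intro y hy
              have hy1 : (1:ℝ) ≤ y := le_trans h (le_of_lt hy)
              refine Real.exp_le_exp.mpr ?_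
              have h1 : t ^ (a - 1) ≤ y ^ (a - 1) :=
                Real.rpow_le_rpow (by linarith) (le_of_lt hy) (by linarith)
              have h2 : y ^ a = y ^ (a - 1) * y := by
                rw [← Real.rpow_add_one (by linarith : y ≠ 0) (a - 1)]; ring_nf
              rw [hk, h2]
              nlinarith [mul_le_mul_of_nonneg_right
                (mul_le_mul_of_nonneg_left h1 hb.le) (by linarith : (0:ℝ) ≤ y)]
          have step2 : (∫ y in Set.Ioi t, Real.exp (-k * y)) = Real.exp (-(k * t)) / k := by
            have h := integral_comp_mul_left_Ioi (fun u => Real.exp (-u)) t hk0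
            simp only [smul_eq_mul, integral_exp_neg_Ioi] at h
            simp only [neg_mul]
            rw [h, inv_mul_eq_div]
          calc (∫ y in Set.Ioi t, Real.exp (-b * y ^ a)) ≤ Real.exp (-(k * t)) / k := by
                rw [← step2]; exact step1
            _ ≤ Real.exp (-b * t ^ a) / b := by
                rw [hkt, neg_mul]
                gcongr
        calc ψb t * (ψ t)⁻¹ ≤ (c * (Real.exp (-b * t ^ a) / b)) * (ψ t)⁻¹ :=
              mul_le_mul_of_nonneg_right key (inv_nonneg.2 (hψpos t).le)
          _ = 1 / b := by
              rw [hψ]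
              field_simp
    · -- a < 1 : not Memℒp
      push_neg at h1a
      refine iff_of_false ?_ ?_
      swap
      · rintro (h | h) <;> [exact absurd h (not_le.mpr h1a); exact absurd h (lt_irrefl 1)]
      intro hmem
      have hS : eLpNormEssSup (fun t => ψb t * (ψ t) ^ (-(1 / 1 : ℝ)))
          (volume.restrict (Set.Ici (0:ℝ))) < ⊤ := by
        have := hmem.2; rwa [eLpNorm_exponent_top] at this
      set C : ℝ := (eLpNormEssSup (fun t => ψb t * (ψ t) ^ (-(1 / 1 : ℝ)))
          (volume.restrict (Set.Ici (0:ℝ)))).toReal with hC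
      have hae : ∀ᵐ t ∂(volume.restrict (Set.Ici (0:ℝ))),
          ‖ψb t * (ψ t) ^ (-(1 / 1 : ℝ))‖ ≤ C := by
        filter_upwards [enorm_ae_le_eLpNormEssSup
          (fun t => ψb t * (ψ t) ^ (-(1 / 1 : ℝ))) (volume.restrict (Set.Ici (0:ℝ)))] with t h
        have := ENNReal.toReal_mono hS.ne h
        rw [hC]
        simpa using this
      -- lower bound for f
      have hmain : ∀ t : ℝ, 1 ≤ t →
          t ^ (1 - a) * Real.exp (-(a * b)) ≤ ψb t * (ψ t) ^ (-(1 / 1 : ℝ)) := by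
        intro t ht
        have ht0 : (0:ℝ) < t := lt_of_lt_of_le one_pos ht
        set s : ℝ := t ^ (1 - a) with hs
        have hs0 : 0 < s := Real.rpow_pos_of_pos ht0 _
        -- (t+s)^a ≤ t^a + a
        have hBer : (t + s) ^ a ≤ t ^ a + a := by
          have hts : t + s = t * (1 + s / t) := by field_simp
          have h1 : (1 + s / t) ^ a ≤ 1 + a * (s / t) :=
            rpow_one_add_le_one_add_mul_self
              (le_trans (by norm_num : (-1:ℝ) ≤ 0) (by positivity)) ha.le h1a.le
          have h2 : t ^ a * s = t := by
            rw [hs, ← Real.rpow_add ht0]; simp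
          calc (t + s) ^ a = t ^ a * (1 + s / t) ^ a := by
                rw [hts, Real.mul_rpow ht0.le (by positivity)]
            _ ≤ t ^ a * (1 + a * (s / t)) :=
                mul_le_mul_of_nonneg_left h1 (Real.rpow_pos_of_pos ht0 _).le
            _ = t ^ a + a * (t ^ a * s / t) := by ring
            _ = t ^ a + a := by rw [h2, div_self ht0.ne', mul_one]
        -- ψb lower bound
        have hψblow : c * (s * Real.exp (-b * (t + s) ^ a)) ≤ ψb t := by
          rw [hψb' t]
          refine mul_le_mul_of_nonneg_left ?_ hcpos.le
          have e1 : s * Real.exp (-b * (t + s) ^ a)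
              = ∫ _ in Set.Ioc t (t + s), Real.exp (-b * (t + s) ^ a) := by
            rw [setIntegral_const, measureReal_def, Real.volume_Ioc, smul_eq_mul,
              ENNReal.toReal_ofReal (by linarith)]
            ring_nf
          have e2 : (∫ _ in Set.Ioc t (t + s), Real.exp (-b * (t + s) ^ a))
              ≤ ∫ y in Set.Ioc t (t + s), Real.exp (-b * y ^ a) := by
            refine setIntegral_mono_on (Iff.mpr integrableOn_const_iff ?_)
              ((aux_integrable' ha hb ht0.le).mono_set Set.Ioc_subset_Ioi_self)
              measurableSet_Ioc ?_
            · right; rw [Real.volume_Ioc]; exact ENNReal.ofReal_lt_top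
            · intro y hy
              refine Real.exp_le_exp.mpr ?_
              have : y ^ a ≤ (t + s) ^ a :=
                Real.rpow_le_rpow (by linarith [hy.1] : (0:ℝ) ≤ y) hy.2 ha.le
              nlinarith
          have e3 : (∫ y in Set.Ioc t (t + s), Real.exp (-b * y ^ a))
              ≤ ∫ y in Set.Ioi t, Real.exp (-b * y ^ a) := by
            refine setIntegral_mono_set (aux_integrable' ha hb ht0.le)
              (Filter.Eventually.of_forall fun y => by positivity)
              ((Set.Ioc_subset_Ioi_self).eventuallyLE)
          linarith [e1 ▸ (e2.trans e3)]
        have hψinv : (ψ t) ^ (-(1 / 1 : ℝ)) = (c * Real.exp (-b * t ^ a))⁻¹ := by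
          rw [hψ]; norm_num [Real.rpow_neg_one]
        rw [hψinv]
        have hEpos : (0:ℝ) < c * Real.exp (-b * t ^ a) := by positivity
        have step : c * (s * Real.exp (-b * (t + s) ^ a)) * (c * Real.exp (-b * t ^ a))⁻¹
            ≤ ψb t * (c * Real.exp (-b * t ^ a))⁻¹ :=
          mul_le_mul_of_nonneg_right hψblow (by positivity)
        refine le_trans ?_ step
        have e2 : (c * Real.exp (-b * t ^ a))⁻¹ = c⁻¹ * Real.exp (b * t ^ a) := by
          rw [mul_inv, ← Real.exp_neg, show -(-b * t ^ a) = b * t ^ a by ring]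
        have expand : c * (s * Real.exp (-b * (t + s) ^ a)) * (c * Real.exp (-b * t ^ a))⁻¹
            = s * Real.exp (b * t ^ a + -b * (t + s) ^ a) := by
          rw [Real.exp_add, e2]
          field_simp
        rw [expand]
        refine mul_le_mul_of_nonneg_left (Real.exp_le_exp.mpr ?_) hs0.le
        nlinarith [mul_le_mul_of_nonneg_left hBer hb.le]
      -- contradiction
      set T : ℝ := ((max C 0 + 1) * Real.exp (a * b)) ^ (1 / (1 - a)) with hT
      have hR1 : 1 ≤ (max C 0 + 1) * Real.exp (a * b) := by
        have h1 : (1:ℝ) ≤ max C 0 + 1 := by simp [le_max_right]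
        nlinarith [Real.one_le_exp (by positivity : (0:ℝ) ≤ a * b)]
      have hT1 : 1 ≤ T :=
        Real.one_le_rpow hR1 (le_of_lt (div_pos one_pos (by linarith)))
      have hfgt : ∀ t : ℝ, T ≤ t → C < ψb t * (ψ t) ^ (-(1 / 1 : ℝ)) := by
        intro t htT
        have ht1 : 1 ≤ t := le_trans hT1 htT
        have h1 : ((max C 0 + 1) * Real.exp (a * b)) ≤ t ^ (1 - a) := by
          have := Real.rpow_le_rpow (by positivity : (0:ℝ) ≤ T) htT
            (by linarith : (0:ℝ) ≤ 1 - a)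
          rwa [hT, ← Real.rpow_mul (by positivity),
            one_div_mul_cancel (sub_ne_zero.mpr (ne_of_gt h1a)),
            Real.rpow_one] at this
        have h2 := hmain t ht1
        have h3 : max C 0 + 1 ≤ t ^ (1 - a) * Real.exp (-(a * b)) := by
          calc max C 0 + 1
              = (max C 0 + 1) * Real.exp (a * b) * Real.exp (-(a * b)) := by
                rw [mul_assoc, ← Real.exp_add]; simp
            _ ≤ t ^ (1 - a) * Real.exp (-(a * b)) :=
                mul_le_mul_of_nonneg_right h1 (Real.exp_pos _).le
        calc C ≤ max C 0 := le_max_left _ _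
          _ < max C 0 + 1 := by linarith
          _ ≤ _ := le_trans h3 h2
      rw [ae_iff] at hae
      rw [Measure.restrict_apply' measurableSet_Ici] at hae
      have hsub : Set.Ici T ⊆ {t | ¬‖ψb t * (ψ t) ^ (-(1 / 1 : ℝ))‖ ≤ C} ∩ Set.Ici 0 := by
        intro t ht
        refine ⟨?_, le_trans (by linarith : (0:ℝ) ≤ T) ht⟩
        simp only [Set.mem_setOf_eq, not_le]
        calc C < ψb t * (ψ t) ^ (-(1 / 1 : ℝ)) := hfgt t ht
          _ ≤ ‖ψb t * (ψ t) ^ (-(1 / 1 : ℝ))‖ := le_abs_self _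
      have := measure_mono (μ := volume) hsub
      rw [hae, Real.volume_Ici] at this
      exact absurd this (by simp)
  · -- 1 < p
    refine iff_of_true ?_ (Or.inr hp1)
    have hp0 : (0:ℝ) < p := by linarith
    have hpm : (0:ℝ) < p - 1 := by linarith
    set δ : ℝ := (p - 1) / (2 * p) with hδ
    have hδ0 : 0 < δ := by positivity
    have hδ1 : δ < 1 := by rw [hδ]; rw [div_lt_one (by positivity)]; nlinarith
    set Iδ : ℝ := ∫ y in Set.Ioi (0:ℝ), Real.exp (-(b * δ) * y ^ a) with hIδ
    have hIδnn : 0 ≤ Iδ :=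
      setIntegral_nonneg measurableSet_Ioi fun y _ => (Real.exp_pos _).le
    set K : ℝ := c ^ (1 - 1 / p) * Iδ with hK
    have hKnn : 0 ≤ K := mul_nonneg (Real.rpow_pos_of_pos hcpos _).le hIδnn
    -- pointwise bound
    have hbd : ∀ t : ℝ, 0 ≤ t →
        ψb t * (ψ t) ^ (-(1 / p)) ≤ K * Real.exp (-(b * δ) * t ^ a) := by
      intro t ht
      have hψbub : ψb t ≤ c * (Real.exp (-(b * (1 - δ)) * t ^ a) * Iδ) := by
        rw [hψb' t]
        refine mul_le_mul_of_nonneg_left ?_ hcpos.le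
        have step1 : (∫ y in Set.Ioi t, Real.exp (-b * y ^ a))
            ≤ ∫ y in Set.Ioi t, Real.exp (-(b * (1 - δ)) * t ^ a) *
              Real.exp (-(b * δ) * y ^ a) := by
          refine setIntegral_mono_on (aux_integrable' ha hb ht) ?_ measurableSet_Ioi ?_
          · exact (aux_integrable' ha (mul_pos hb hδ0) ht).const_mul _
          · intro y hy
            rw [← Real.exp_add]
            refine Real.exp_le_exp.mpr ?_
            have hta : t ^ a ≤ y ^ a := Real.rpow_le_rpow ht (le_of_lt hy) ha.le
            nlinarith [mul_le_mul_of_nonneg_left hta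
              (mul_nonneg hb.le (by linarith : (0:ℝ) ≤ 1 - δ))]
        have step2 : (∫ y in Set.Ioi t, Real.exp (-(b * (1 - δ)) * t ^ a) *
              Real.exp (-(b * δ) * y ^ a))
            = Real.exp (-(b * (1 - δ)) * t ^ a) *
              ∫ y in Set.Ioi t, Real.exp (-(b * δ) * y ^ a) :=
          integral_const_mul _ _
        have step3 : (∫ y in Set.Ioi t, Real.exp (-(b * δ) * y ^ a)) ≤ Iδ := by
          refine setIntegral_mono_set (aux_integrable ha (mul_pos hb hδ0))
            (Filter.Eventually.of_forall fun y => (Real.exp_pos _).le)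
            ((Set.Ioi_subset_Ioi ht).eventuallyLE)
        calc (∫ y in Set.Ioi t, Real.exp (-b * y ^ a))
            ≤ Real.exp (-(b * (1 - δ)) * t ^ a) *
              ∫ y in Set.Ioi t, Real.exp (-(b * δ) * y ^ a) := by rw [← step2]; exact step1
          _ ≤ Real.exp (-(b * (1 - δ)) * t ^ a) * Iδ :=
              mul_le_mul_of_nonneg_left step3 (Real.exp_pos _).le
      have hψpow : (ψ t) ^ (-(1 / p)) = c ^ (-(1 / p)) * Real.exp ((b / p) * t ^ a) := by
        rw [hψ, Real.mul_rpow hcpos.le (Real.exp_pos _).le, ← Real.exp_mul]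
        congr 1
        field_simp
      calc ψb t * (ψ t) ^ (-(1 / p))
          ≤ (c * (Real.exp (-(b * (1 - δ)) * t ^ a) * Iδ)) * (ψ t) ^ (-(1 / p)) :=
            mul_le_mul_of_nonneg_right hψbub (Real.rpow_pos_of_pos (hψpos t) _).le
        _ = K * Real.exp (-(b * δ) * t ^ a) := by
            have hcsplit : c * c ^ (-(1 / p)) = c ^ (1 - 1 / p) := by
              rw [show (1 - 1 / p : ℝ) = 1 + -(1 / p) by ring, Real.rpow_add hcpos,
                Real.rpow_one]
            have hexp : Real.exp (-(b * (1 - δ)) * t ^ a) * Real.exp ((b / p) * t ^ a)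
                = Real.exp (-(b * δ) * t ^ a) := by
              rw [← Real.exp_add]
              congr 1
              rw [hδ]
              field_simp
              ring
            rw [hψpow, hK, ← hcsplit, ← hexp]
            ring
    -- dominating function is in L^{p'}
    have hp'0 : ENNReal.ofReal (p / (p - 1)) ≠ 0 := by
      simp only [ne_eq, ENNReal.ofReal_eq_zero, not_le]
      positivity
    have hp't : ENNReal.ofReal (p / (p - 1)) ≠ ⊤ := ENNReal.ofReal_ne_top
    have hrpos : (0:ℝ) < p / (p - 1) := div_pos hp0 hpm
    have hgmem : MemLp (fun t => K * Real.exp (-(b * δ) * t ^ a))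
        (ENNReal.ofReal (p / (p - 1))) (volume.restrict (Set.Ici (0:ℝ))) := by
      have hgm : AEStronglyMeasurable (fun t : ℝ => K * Real.exp (-(b * δ) * t ^ a))
          (volume.restrict (Set.Ici (0:ℝ))) :=
        (continuous_const.mul (Real.continuous_exp.comp
          (continuous_const.mul (Real.continuous_rpow_const ha.le)))).aestronglyMeasurable
      refine (memLp_norm_rpow_iff hgm hp'0 hp't).mp ?_
      rw [ENNReal.div_self hp'0 hp't, memLp_one_iff_integrable]
      have heq : (fun x : ℝ => ‖K * Real.exp (-(b * δ) * x ^ a)‖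
            ^ (ENNReal.ofReal (p / (p - 1))).toReal)
          = fun x : ℝ => K ^ (p / (p - 1))
            * Real.exp (-(b * δ * (p / (p - 1))) * x ^ a) := by
        funext x
        rw [Real.norm_eq_abs, abs_of_nonneg (mul_nonneg hKnn (Real.exp_pos _).le),
          ENNReal.toReal_ofReal hrpos.le,
          Real.mul_rpow hKnn (Real.exp_pos _).le, ← Real.exp_mul]
        congr 1
        ring
      rw [heq]
      refine Integrable.const_mul ?_ _
      exact Iff.mpr integrableOn_Ici_iff_integrableOn_Ioi
        (aux_integrable ha (mul_pos (mul_pos hb hδ0) hrpos))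
    refine hgmem.of_le hmeas ?_
    filter_upwards [ae_restrict_mem measurableSet_Ici] with t ht
    rw [Real.norm_eq_abs, Real.norm_eq_abs, abs_of_nonneg (hfnn t),
      abs_of_nonneg (mul_nonneg hKnn (Real.exp_pos _).le)]
    exact hbd t ht
end

section
/- Let D be an interval with 0 = min D, ψ a probability density on D positive a.e., 1 ≤ p ≤ ∞ with conjugate p′. The integral ∫_D |g(t)| 1_{[0,x)}(t) dt is finite for every g ∈ L_{p,ψ}(D) and every x ∈ D if and only if either p = ∞, or p < ∞ and ψ^{−1/p} ∈ L^loc_{p′}(D). -/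
/-!
Write `ν = ψ dt` on `D`. Since `ψ > 0` a.e., `g ↦ ψ^{1/p} g` is an isometry of `L^p(ν)` onto
`L^p(D)`, so the left-hand side says that `u ψ^{-1/p}` is integrable on `E = D ∩ [0, x)` for every
`u ∈ L^p(E)`. Hölder's inequality gives this when `ψ^{-1/p} ∈ L^{p'}(E)`. Conversely, on the finite
measure space `E` the condition forces `ψ^{-1/p} ∈ L^{p'}(E)` (Landau's resonance theorem), by a
gliding hump: if `h ∉ L^{p'}`, truncations of `h` (superlevel sets of `h` when `p = 1`) give
unit vectors `f_k` of `L^p` with `∫ f_k h ≥ 4^k`, and `F = sup_k 2^{-k} f_k` lies in `L^p` while `∫ F h = ∞`.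
For `p = ∞` we have `p' = 1` and, as `(∞ : ℝ≥0∞).toReal = 0`, the weight `ψ ^ (-(1 / p.toReal))`
is `1`.
-/

open MeasureTheory
open scoped ENNReal

theorem ENNReal.rpow_iSup {ι : Sort*} {p : ℝ} (hp : 0 < p) (c : ι → ℝ≥0∞) :
    (⨆ i, c i) ^ p = ⨆ i, c i ^ p :=
  Monotone.map_iSup_of_continuousAt ENNReal.continuous_rpow_const.continuousAt
    (ENNReal.monotone_rpow_of_nonneg hp.le) (ENNReal.zero_rpow_of_pos hp)

section Resonance

variable {α : Type*} [MeasurableSpace α] {μ : Measure α}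

theorem exists_lintegral_rpow_lt_top_lintegral_mul_eq_top {p : ℝ} (hp : 0 < p) (h : α → ℝ≥0∞)
    (hunb : ∀ C ≠ ∞, ∃ f : α → ℝ≥0∞, Measurable f ∧ ∫⁻ t, f t ^ p ∂μ ≤ 1 ∧
      C ≤ ∫⁻ t, f t * h t ∂μ) :
    ∃ F : α → ℝ≥0∞, Measurable F ∧ ∫⁻ t, F t ^ p ∂μ < ∞ ∧ ∫⁻ t, F t * h t ∂μ = ∞ := by
  choose f hf_meas hf_norm hf_mass using fun k : ℕ => hunb (4 ^ k) (ENNReal.pow_ne_top (by simp))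
  refine ⟨fun t => ⨆ k, 2⁻¹ ^ k * f k t, .iSup fun k => (hf_meas k).const_mul _, ?_, ?_⟩
  · calc ∫⁻ t, (⨆ k, 2⁻¹ ^ k * f k t) ^ p ∂μ
        ≤ ∫⁻ t, ∑' k, (2⁻¹ ^ k * f k t) ^ p ∂μ := by
          refine lintegral_mono fun t => ?_
          rw [ENNReal.rpow_iSup hp]
          exact iSup_le fun k => ENNReal.le_tsum k
      _ = ∑' k, (2⁻¹ ^ p) ^ k * ∫⁻ t, f k t ^ p ∂μ := by
          rw [lintegral_tsum fun k => (((hf_meas k).const_mul _).pow_const _).aemeasurable]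
          refine tsum_congr fun k => ?_
          simp_rw [ENNReal.mul_rpow_of_nonneg _ _ hp.le, ← ENNReal.rpow_natCast_mul,
            mul_comm _ p, ENNReal.rpow_mul, ENNReal.rpow_natCast]
          exact lintegral_const_mul _ ((hf_meas k).pow_const _)
      _ ≤ ∑' k, (2⁻¹ ^ p) ^ k :=
          ENNReal.tsum_le_tsum fun k => mul_le_of_le_one_right' (hf_norm k)
      _ < ∞ := tsum_geometric_lt_top.2 (ENNReal.rpow_lt_one (by norm_num) hp)
  · refine top_le_iff.1 <| le_of_tendsto'
      (ENNReal.tendsto_pow_atTop_nhds_top_iff.2 ENNReal.one_lt_two) fun k => ?_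
    calc (2 : ℝ≥0∞) ^ k = 2⁻¹ ^ k * 4 ^ k := by
          rw [← mul_pow, show (4 : ℝ≥0∞) = 2 * 2 by norm_num, ← mul_assoc,
            ENNReal.inv_mul_cancel (by simp) (by simp), one_mul]
      _ ≤ 2⁻¹ ^ k * ∫⁻ t, f k t * h t ∂μ := by gcongr; exact hf_mass k
      _ = ∫⁻ t, 2⁻¹ ^ k * f k t * h t ∂μ := by
          simp_rw [mul_assoc]
          exact (lintegral_const_mul' _ _ (by simp)).symm
      _ ≤ ∫⁻ t, (⨆ k, 2⁻¹ ^ k * f k t) * h t ∂μ :=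
          lintegral_mono fun t => by gcongr; exact le_iSup (fun k => 2⁻¹ ^ k * f k t) k

theorem exists_lintegral_rpow_le_one_le_lintegral_mul [IsFiniteMeasure μ] {p q : ℝ}
    (hpq : p.HolderConjugate q) {h : α → ℝ≥0∞} (hh : Measurable h)
    (htop : ∫⁻ t, h t ^ q ∂μ = ∞) {C : ℝ≥0∞} (hC : C ≠ ∞) :
    ∃ f : α → ℝ≥0∞, Measurable f ∧ ∫⁻ t, f t ^ p ∂μ ≤ 1 ∧ C ≤ ∫⁻ t, f t * h t ∂μ := by
  have hp := hpq.pos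
  have hq := hpq.symm.pos
  set g : ℕ → α → ℝ≥0∞ := fun n t => min (h t) n
  have hg_meas n : Measurable (g n) := hh.min measurable_const
  have hsup : ⨆ n : ℕ, ∫⁻ t, g n t ^ q ∂μ = ∞ := by
    rw [← lintegral_iSup (fun n => (hg_meas n).pow_const q)
      fun m n hmn t => by gcongr; exact min_le_min_left _ (by exact_mod_cast hmn), ← htop]
    congr with t
    rw [← ENNReal.rpow_iSup hq, ← inf_iSup_eq, ENNReal.iSup_natCast, inf_top_eq]
  obtain ⟨n, hn⟩ : ∃ n, C ^ q < ∫⁻ t, g n t ^ q ∂μ :=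
    lt_iSup_iff.1 (hsup ▸ ENNReal.rpow_lt_top_of_nonneg hq.le hC)
  set a := ∫⁻ t, g n t ^ q ∂μ
  have ha0 : a ≠ 0 := (pos_of_gt hn).ne'
  have ha_top : a ≠ ∞ := by
    refine ne_top_of_le_ne_top (lintegral_const_lt_top (μ := μ)
      (ENNReal.rpow_ne_top_of_nonneg hq.le (ENNReal.natCast_ne_top n))).ne ?_
    exact lintegral_mono fun t => by gcongr; exact min_le_right _ _
  -- the extremal function of Hölder's inequality for the truncation `g n`
  refine ⟨fun t => g n t ^ (q - 1) * a ^ (-p⁻¹),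
    ((hg_meas n).pow_const _).mul_const _, le_of_eq ?_, ?_⟩
  · calc ∫⁻ t, (g n t ^ (q - 1) * a ^ (-p⁻¹)) ^ p ∂μ = ∫⁻ t, g n t ^ q * a⁻¹ ∂μ := by
          congr with t
          rw [ENNReal.mul_rpow_of_nonneg _ _ hp.le, ← ENNReal.rpow_mul, ← ENNReal.rpow_mul,
            hpq.symm.sub_one_mul_conj, neg_mul, inv_mul_cancel₀ hp.ne', ENNReal.rpow_neg_one]
      _ = 1 := by
          rw [lintegral_mul_const _ ((hg_meas n).pow_const q), ENNReal.mul_inv_cancel ha0 ha_top]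
  · calc C = (C ^ q) ^ q⁻¹ := by
          rw [← ENNReal.rpow_mul, mul_inv_cancel₀ hq.ne', ENNReal.rpow_one]
      _ ≤ a ^ q⁻¹ := by gcongr
      _ = a * a ^ (-p⁻¹) := by
          rw [← hpq.one_sub_inv, sub_eq_add_neg, ENNReal.rpow_add _ _ ha0 ha_top,
            ENNReal.rpow_one]
      _ = ∫⁻ t, g n t ^ (q - 1) * a ^ (-p⁻¹) * g n t ∂μ := by
          rw [← lintegral_mul_const _ ((hg_meas n).pow_const q)]
          congr with t
          conv_lhs => rw [← sub_add_cancel q 1]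
          rw [ENNReal.rpow_add_of_nonneg _ _ hpq.symm.sub_one_pos.le zero_le_one,
            ENNReal.rpow_one, mul_right_comm]
      _ ≤ ∫⁻ t, g n t ^ (q - 1) * a ^ (-p⁻¹) * h t ∂μ := by
          gcongr with t
          exact min_le_left _ _

theorem exists_lintegral_le_one_le_lintegral_mul [IsFiniteMeasure μ] {h : α → ℝ≥0∞}
    (hh : Measurable h) (htop : essSup h μ = ∞) {C : ℝ≥0∞} (hC : C ≠ ∞) :
    ∃ f : α → ℝ≥0∞, Measurable f ∧ ∫⁻ t, f t ∂μ ≤ 1 ∧ C ≤ ∫⁻ t, f t * h t ∂μ := by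
  set A := {t | C < h t}
  have hA : MeasurableSet A := hh measurableSet_Ioi
  have hA0 : μ A ≠ 0 := fun hA0 => by
    have : essSup h μ ≤ C :=
      essSup_le_of_ae_le C <| by simpa [Filter.EventuallyLE, ae_iff, A] using hA0
    exact hC (top_le_iff.1 (htop ▸ this))
  have hA_top : μ A ≠ ∞ := measure_ne_top μ A
  refine ⟨A.indicator fun _ => (μ A)⁻¹, measurable_const.indicator hA, le_of_eq ?_, ?_⟩
  · rw [lintegral_indicator_const hA, ENNReal.inv_mul_cancel hA0 hA_top]
  · calc C = ∫⁻ t, A.indicator (fun _ => (μ A)⁻¹ * C) t ∂μ := by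
          rw [lintegral_indicator_const hA, mul_right_comm, ENNReal.inv_mul_cancel hA0 hA_top,
            one_mul]
      _ ≤ ∫⁻ t, A.indicator (fun _ => (μ A)⁻¹) t * h t ∂μ := by
          refine lintegral_mono fun t => ?_
          rw [← Set.indicator_mul_const]
          exact Set.indicator_le_indicator' fun ht => by gcongr; exact le_of_lt ht

theorem lintegral_mul_enorm_lt_top_of_forall_integrable_mul {p : ℝ≥0∞} (hp0 : p ≠ 0)
    (hp : p ≠ ∞) {h : α → ℝ} (H : ∀ f : α → ℝ, MemLp f p μ → Integrable (f * h) μ)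
    {F : α → ℝ≥0∞} (hF : Measurable F) (hFp : ∫⁻ t, F t ^ p.toReal ∂μ < ∞) :
    ∫⁻ t, F t * ‖h t‖ₑ ∂μ < ∞ := by
  have hp_pos : 0 < p.toReal := ENNReal.toReal_pos hp0 hp
  have hF_enorm : ∀ᵐ t ∂μ, ‖(F t).toReal‖ₑ = F t := by
    filter_upwards [ae_lt_top (hF.pow_const _) hFp.ne] with t ht
    exact Real.enorm_toReal ((ENNReal.rpow_lt_top_iff_of_pos hp_pos).1 ht).ne
  have hf : MemLp (fun t => (F t).toReal) p μ := by
    refine ⟨hF.ennreal_toReal.aestronglyMeasurable, ?_⟩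
    rw [eLpNorm_eq_lintegral_rpow_enorm_toReal hp0 hp]
    refine ENNReal.rpow_lt_top_of_nonneg (by positivity) (ne_of_lt ?_)
    rwa [lintegral_congr_ae (hF_enorm.mono fun t ht => by rw [ht])]
  calc ∫⁻ t, F t * ‖h t‖ₑ ∂μ = ∫⁻ t, ‖(F t).toReal * h t‖ₑ ∂μ :=
        lintegral_congr_ae (hF_enorm.mono fun t ht => by simp only [enorm_mul, ht])
    _ < ∞ := (H _ hf).2

theorem memLp_of_forall_integrable_mul [IsFiniteMeasure μ] {p q : ℝ≥0∞}
    [p.HolderConjugate q] {h : α → ℝ} (hh : AEStronglyMeasurable h μ)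
    (H : ∀ f : α → ℝ, MemLp f p μ → Integrable (f * h) μ) : MemLp h q μ := by
  rcases eq_or_ne p ∞ with rfl | hp
  · rw [(ENNReal.HolderConjugate.eq_top_iff_eq_one ∞ q).1 rfl, memLp_one_iff_integrable]
    simpa using H 1 (memLp_const 1)
  obtain ⟨h', hh'_meas, hhh'⟩ := hh
  replace H (f : α → ℝ) (hf : MemLp f p μ) : Integrable (f * h') μ :=
    (H f hf).congr (hhh'.mono fun t ht => by simp only [Pi.mul_apply, ht])
  rw [memLp_congr_ae hhh']
  have hp0 : p ≠ 0 := ENNReal.HolderConjugate.ne_zero p q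
  have hh'_enorm : Measurable fun t => ‖h' t‖ₑ := hh'_meas.measurable.enorm
  -- by the gliding hump, `‖h'‖ₑ` is bounded on the unit ball of `L^p`
  have hbdd : ¬ ∀ C ≠ ∞, ∃ f : α → ℝ≥0∞, Measurable f ∧ ∫⁻ t, f t ^ p.toReal ∂μ ≤ 1 ∧
      C ≤ ∫⁻ t, f t * ‖h' t‖ₑ ∂μ := fun hunb => by
    obtain ⟨F, hF, hFp, hFh⟩ :=
      exists_lintegral_rpow_lt_top_lintegral_mul_eq_top (ENNReal.toReal_pos hp0 hp) _ hunb
    exact (lintegral_mul_enorm_lt_top_of_forall_integrable_mul hp0 hp H hF hFp).ne hFh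
  refine ⟨hh'_meas.aestronglyMeasurable, lt_of_not_ge fun htop => hbdd fun C hC => ?_⟩
  rw [top_le_iff] at htop
  rcases eq_or_ne p 1 with rfl | hp1
  · rw [(ENNReal.HolderConjugate.eq_top_iff_eq_one q 1).2 rfl, eLpNorm_exponent_top] at htop
    simpa using exists_lintegral_le_one_le_lintegral_mul hh'_enorm htop hC
  · have hq : q ≠ ∞ := (ENNReal.HolderConjugate.ne_top_iff_ne_one q p).2 hp1
    have hq0 : q ≠ 0 := ENNReal.HolderConjugate.ne_zero q p
    rw [eLpNorm_eq_lintegral_rpow_enorm_toReal hq0 hq,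
      ENNReal.rpow_eq_top_iff_of_pos (by simp [ENNReal.toReal_pos hq0 hq])] at htop
    exact exists_lintegral_rpow_le_one_le_lintegral_mul
      (ENNReal.HolderConjugate.toReal_of_ne_top hp hq) hh'_enorm htop hC

end Resonance

section Weighted

variable {α : Type*} [MeasurableSpace α] {μ : Measure α} {ψ : α → ℝ} {p : ℝ≥0∞}

theorem eLpNorm_withDensity_ofReal (hψ : Measurable ψ) (hψ_nonneg : ∀ᵐ t ∂μ, 0 ≤ ψ t)
    (hp0 : p ≠ 0) (hp : p ≠ ∞) (g : α → ℝ) :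
    eLpNorm g p (μ.withDensity fun t => ENNReal.ofReal (ψ t)) =
      eLpNorm (fun t => ψ t ^ (1 / p.toReal) * g t) p μ := by
  have hp_pos : 0 < p.toReal := ENNReal.toReal_pos hp0 hp
  simp only [eLpNorm_eq_lintegral_rpow_enorm_toReal hp0 hp]
  rw [lintegral_withDensity_eq_lintegral_mul_non_measurable _ hψ.ennreal_ofReal
    (.of_forall fun _ => ENNReal.ofReal_lt_top)]
  congr 1
  refine lintegral_congr_ae ?_
  filter_upwards [hψ_nonneg] with t ht
  rw [Pi.mul_apply, enorm_mul, ENNReal.mul_rpow_of_nonneg _ _ hp_pos.le,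
    Real.enorm_eq_ofReal (Real.rpow_nonneg ht _), ENNReal.ofReal_rpow_of_nonneg
      (Real.rpow_nonneg ht _) hp_pos.le, ← Real.rpow_mul ht, one_div_mul_cancel hp_pos.ne',
    Real.rpow_one]

theorem MemLp.rpow_mul_of_withDensity (hψ : Measurable ψ) (hψ_pos : ∀ᵐ t ∂μ, 0 < ψ t)
    (hp0 : p ≠ 0) {g : α → ℝ} (hg : MemLp g p (μ.withDensity fun t => ENNReal.ofReal (ψ t))) :
    MemLp (fun t => ψ t ^ (1 / p.toReal) * g t) p μ := by
  have hac : μ ≪ μ.withDensity fun t => ENNReal.ofReal (ψ t) :=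
    withDensity_absolutelyContinuous' hψ.ennreal_ofReal.aemeasurable
      (hψ_pos.mono fun t ht => by simpa using ht)
  rcases eq_or_ne p ∞ with rfl | hp
  · simp only [ENNReal.toReal_top, div_zero, Real.rpow_zero, one_mul]
    refine ⟨hg.1.mono_ac hac, ?_⟩
    simpa only [eLpNorm_exponent_top] using (eLpNormEssSup_mono_measure g hac).trans_lt hg.2
  · refine ⟨(hψ.pow_const _).aestronglyMeasurable.mul (hg.1.mono_ac hac), ?_⟩
    rw [← eLpNorm_withDensity_ofReal hψ (hψ_pos.mono fun t ht => ht.le) hp0 hp]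
    exact hg.2

theorem MemLp.withDensity_rpow_neg_mul (hψ : Measurable ψ) (hψ_pos : ∀ᵐ t ∂μ, 0 < ψ t)
    (hp0 : p ≠ 0) (hp : p ≠ ∞) {u : α → ℝ} (hu : MemLp u p μ) :
    MemLp (fun t => ψ t ^ (-(1 / p.toReal)) * u t) p
      (μ.withDensity fun t => ENNReal.ofReal (ψ t)) := by
  refine ⟨((hψ.pow_const _).aestronglyMeasurable.mul hu.1).mono_ac
    (withDensity_absolutelyContinuous μ _), ?_⟩
  rw [eLpNorm_withDensity_ofReal hψ (hψ_pos.mono fun t ht => ht.le) hp0 hp]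
  refine (eLpNorm_congr_ae ?_).trans_lt hu.2
  filter_upwards [hψ_pos] with t ht
  rw [Real.rpow_neg ht.le, ← mul_assoc, mul_inv_cancel₀ (Real.rpow_pos_of_pos ht _).ne',
    one_mul]

theorem forall_integrableOn_abs_iff_memLp_rpow_neg (hψ : Measurable ψ)
    (hψ_pos : ∀ᵐ t ∂μ, 0 < ψ t) {q : ℝ≥0∞} [p.HolderConjugate q] {E : Set α}
    (hE : MeasurableSet E) [IsFiniteMeasure (μ.restrict E)] :
    (∀ g : α → ℝ, MemLp g p (μ.withDensity fun t => ENNReal.ofReal (ψ t)) →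
        IntegrableOn (fun t => |g t|) E μ) ↔
      MemLp (fun t => ψ t ^ (-(1 / p.toReal))) q (μ.restrict E) := by
  have hp0 : p ≠ 0 := ENNReal.HolderConjugate.ne_zero p q
  constructor
  · intro H
    rcases eq_or_ne p ∞ with rfl | hp
    · simpa [(ENNReal.HolderConjugate.eq_top_iff_eq_one ∞ q).1 rfl] using memLp_const 1
    refine memLp_of_forall_integrable_mul (p := p) (hψ.pow_const _).aestronglyMeasurable
      fun f hf => ?_
    have hg := MemLp.withDensity_rpow_neg_mul hψ hψ_pos hp0 hp
      ((memLp_indicator_iff_restrict hE).2 hf)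
    refine (H _ hg).mono' (hf.1.mul (hψ.pow_const _).aestronglyMeasurable) ?_
    filter_upwards [ae_restrict_mem hE] with t ht
    simp [Set.indicator_of_mem ht, abs_mul, mul_comm]
  · intro hw g hg
    have hu := (MemLp.rpow_mul_of_withDensity hψ hψ_pos hp0 hg).restrict E
    refine (hu.integrable_mul hw).abs.congr ?_
    filter_upwards [ae_restrict_of_ae hψ_pos] with t ht
    rw [Pi.mul_apply, mul_right_comm, Real.rpow_neg ht.le,
      mul_inv_cancel₀ (Real.rpow_pos_of_pos ht _).ne', one_mul]

end Weighted

theorem stmt7_general (D : Set ℝ)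
    (ψ : ℝ → ℝ) (hψm : Measurable ψ)
    (hψpos : ∀ᵐ t ∂(volume.restrict D), 0 < ψ t)
    (p p' : ℝ≥0∞) (hpq : 1 / p + 1 / p' = 1) :
    (∀ g : ℝ → ℝ,
        MemLp g p ((volume.restrict D).withDensity fun t => ENNReal.ofReal (ψ t)) →
        ∀ x ∈ D, IntegrableOn (fun t => |g t|) (D ∩ Set.Ico 0 x) volume)
    ↔ (p = ⊤ ∨ (p ≠ ⊤ ∧ ∀ x ∈ D,
        MemLp (fun t => (ψ t) ^ (-(1 / p.toReal))) p'
          (volume.restrict (D ∩ Set.Ico 0 x)))) := by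
  have : p.HolderConjugate p' :=
    ENNReal.holderConjugate_iff.2 (by simpa only [one_div] using hpq)
  have hres (x : ℝ) :
      (volume.restrict D).restrict (Set.Ico 0 x) = volume.restrict (D ∩ Set.Ico 0 x) := by
    rw [Measure.restrict_restrict measurableSet_Ico, Set.inter_comm]
  have hfin (x : ℝ) : IsFiniteMeasure (volume.restrict (D ∩ Set.Ico 0 x)) :=
    isFiniteMeasure_restrict.2 <|
      measure_ne_top_of_subset Set.inter_subset_right measure_Ico_lt_top.ne
  have key (x : ℝ) :=
    haveI : IsFiniteMeasure ((volume.restrict D).restrict (Set.Ico 0 x)) := hres x ▸ hfin x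
    forall_integrableOn_abs_iff_memLp_rpow_neg hψm hψpos (p := p) (q := p')
      (E := Set.Ico 0 x) measurableSet_Ico
  simp only [IntegrableOn, hres] at key
  constructor
  · intro H
    by_cases hp : p = ⊤
    · exact .inl hp
    · exact .inr ⟨hp, fun x hx => (key x).1 fun g hg => H g hg x hx⟩
  · rintro (rfl | ⟨-, H⟩) g hg x hx
    · refine (key x).2 ?_ g hg
      simpa [(ENNReal.HolderConjugate.eq_top_iff_eq_one ⊤ p').1 rfl] using memLp_const 1
    · exact (key x).2 (H x hx) g hg

/-- `∫_D |g(t)| 1_{[0,x)}(t) dt < ∞` for every `g ∈ L_{p,ψ}(D)` and every `x ∈ D` iff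
`p = ∞`, or `p < ∞` and `ψ^{−1/p} ∈ L^loc_{p'}(D)`. -/
theorem stmt7 (D : Set ℝ)
    (hD : (∃ T : ℝ, 0 < T ∧ (D = Set.Ico 0 T ∨ D = Set.Icc 0 T)) ∨ D = Set.Ici 0)
    (ψ : ℝ → ℝ) (hψm : Measurable ψ) (hψ0 : ∀ t ∈ D, 0 ≤ ψ t)
    (hψpos : ∀ᵐ t ∂(volume.restrict D), 0 < ψ t)
    (hψ1 : ∫ t in D, ψ t = 1)
    (p p' : ℝ≥0∞) (hp : 1 ≤ p) (hpq : 1 / p + 1 / p' = 1) :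
    (∀ g : ℝ → ℝ,
        MemLp g p ((volume.restrict D).withDensity fun t => ENNReal.ofReal (ψ t)) →
        ∀ x ∈ D, IntegrableOn (fun t => |g t|) (D ∩ Set.Ico 0 x) volume)
    ↔ (p = ⊤ ∨ (p ≠ ⊤ ∧ ∀ x ∈ D,
        MemLp (fun t => (ψ t) ^ (-(1 / p.toReal))) p'
          (volume.restrict (D ∩ Set.Ico 0 x)))) :=
  stmt7_general D ψ hψm hψpos p p' hpq
end

section
/- Let d, r ∈ ℕ with r ≤ d, ω > 0, B > 0, 1 ≤ q < ∞, and finite order weights γ_u = ω^{|u|} for |u| ≤ r, γ_u = 0 otherwise. Setting c_u = 1 for |u| = r and c_u = 0 otherwise, the ratio | ( Σ_{w⊆u^c} c_{u∪w} γ_{u∪w} B^{|w|} / γ_u )_u |_q / | (c_u)_u |_q is at least (ωB)^r · binom(d,r)^{1−1/q}, where |·|_q denotes the ℓ_q norm over subsets u with γ_u > 0. -/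
/-!
Keep only the component `u = ∅` of the numerator: since `γ ∅ = 1`, it is
`∑_{|w| = r} ω^r B^r = binom(d,r) (ωB)^r`, while the denominator is `binom(d,r)^{1/q}`.
-/

open Finset

theorem Finset.abs_le_sum_abs_rpow_rpow_one_div {ι : Type*} {s : Finset ι} {i : ι} (hi : i ∈ s)
    (f : ι → ℝ) {q : ℝ} (hq : 0 < q) : |f i| ≤ (∑ u ∈ s, |f u| ^ q) ^ (1 / q) := by
  calc |f i| = (|f i| ^ q) ^ q⁻¹ := (Real.rpow_rpow_inv (abs_nonneg _) hq.ne').symm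
    _ ≤ (∑ u ∈ s, |f u| ^ q) ^ (1 / q) := by
      rw [← one_div]
      exact Real.rpow_le_rpow (by positivity)
        (single_le_sum (f := fun u => |f u| ^ q) (fun u _ => by positivity) hi) (by positivity)

theorem Finset.sum_ite_one_zero_rpow {ι : Type*} (s : Finset ι) (p : ι → Prop) [DecidablePred p]
    {q : ℝ} (hq : q ≠ 0) : ∑ u ∈ s, (if p u then (1 : ℝ) else 0) ^ q = #(s.filter p) := by
  simp [apply_ite (· ^ q), Real.zero_rpow hq]

theorem Finset.card_filter_card_eq_univ {α : Type*} [Fintype α] (r : ℕ) :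
    #(univ.filter fun u : Finset α => u.card = r) = (Fintype.card α).choose r := by
  rw [← powerset_univ, ← powersetCard_eq_filter, card_powersetCard, card_univ]

theorem Finset.sum_powerset_univ_ite_card_eq {α : Type*} [Fintype α] (r : ℕ) (x : ℝ) :
    ∑ w ∈ (univ : Finset α).powerset, (if w.card = r then x else 0) =
      (Fintype.card α).choose r * x := by
  rw [powerset_univ, sum_ite, sum_const_zero, add_zero, sum_const, card_filter_card_eq_univ,
    nsmul_eq_mul]

theorem stmt15_general (d r : ℕ) (hr : r ≤ d) (ω B q : ℝ)
    (hq : 1 ≤ q) :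
    let γ : Finset (Fin d) → ℝ := fun u => if u.card ≤ r then ω ^ u.card else 0
    let c : Finset (Fin d) → ℝ := fun u => if u.card = r then 1 else 0
    let a : Finset (Fin d) → ℝ :=
      fun u => ∑ w ∈ uᶜ.powerset, c (u ∪ w) * γ (u ∪ w) * B ^ w.card / γ u
    ((∑ u ∈ Finset.univ.filter (fun u : Finset (Fin d) => u.card ≤ r), |a u| ^ q) ^ (1 / q))
        / ((∑ u ∈ Finset.univ.filter (fun u : Finset (Fin d) => u.card ≤ r), c u ^ q) ^ (1 / q))
      ≥ (ω * B) ^ r * (d.choose r : ℝ) ^ (1 - 1 / q) := by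
  intro γ c a
  have hq0 : 0 < q := by linarith
  set N : ℝ := (d.choose r : ℝ)
  have hN : 0 < N := Nat.cast_pos.mpr (Nat.choose_pos hr)
  have hden : ∑ u ∈ univ.filter (fun u : Finset (Fin d) => u.card ≤ r), c u ^ q = N := by
    rw [sum_ite_one_zero_rpow _ _ hq0.ne', filter_filter]
    simp only [and_iff_right_of_imp le_of_eq, card_filter_card_eq_univ, Fintype.card_fin, N]
  have ha : a ∅ = N * (ω * B) ^ r := by
    have hterm : ∀ w : Finset (Fin d),
        c (∅ ∪ w) * γ (∅ ∪ w) * B ^ w.card / γ ∅ = if w.card = r then (ω * B) ^ r else 0 := by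
      intro w
      simp only [c, γ, empty_union, card_empty, zero_le, if_true, pow_zero, div_one]
      split_ifs with h hr' <;> first | omega | simp [h, mul_pow]
    simp only [a, compl_empty, hterm, sum_powerset_univ_ite_card_eq, Fintype.card_fin, N]
  have hnum : N * |ω * B| ^ r ≤
      (∑ u ∈ univ.filter (fun u : Finset (Fin d) => u.card ≤ r), |a u| ^ q) ^ (1 / q) := by
    simpa [ha, abs_mul, abs_of_pos hN] using
      abs_le_sum_abs_rpow_rpow_one_div (i := ∅) (by simp) a hq0
  rw [ge_iff_le, hden, le_div_iff₀ (by positivity)]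
  calc (ω * B) ^ r * N ^ (1 - 1 / q) * N ^ (1 / q) = N * (ω * B) ^ r := by
        rw [mul_assoc, ← Real.rpow_add hN, sub_add_cancel, Real.rpow_one, mul_comm]
    _ ≤ N * |ω * B| ^ r := by gcongr N * ?_; exact abs_pow (ω * B) r ▸ le_abs_self _
    _ ≤ _ := hnum

/-- Lower bound for the embedding norm for special finite order weights: with
`c_u = 1` iff `|u| = r`, `γ_u = ω^{|u|}` for `|u| ≤ r`, the weighted `ℓ_q`-ratio is at
least `(ωB)^r · binom(d,r)^{1−1/q}`. -/
theorem stmt15 (d r : ℕ) (hr : r ≤ d) (ω B q : ℝ) (hω : 0 < ω) (hB : 0 < B)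
    (hq : 1 ≤ q) :
    let γ : Finset (Fin d) → ℝ := fun u => if u.card ≤ r then ω ^ u.card else 0
    let c : Finset (Fin d) → ℝ := fun u => if u.card = r then 1 else 0
    let a : Finset (Fin d) → ℝ :=
      fun u => ∑ w ∈ uᶜ.powerset, c (u ∪ w) * γ (u ∪ w) * B ^ w.card / γ u
    ((∑ u ∈ Finset.univ.filter (fun u : Finset (Fin d) => u.card ≤ r), |a u| ^ q) ^ (1 / q))
        / ((∑ u ∈ Finset.univ.filter (fun u : Finset (Fin d) => u.card ≤ r), c u ^ q) ^ (1 / q))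
      ≥ (ω * B) ^ r * (d.choose r : ℝ) ^ (1 - 1 / q) :=
  stmt15_general d r hr ω B q hq
end
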